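/- arXiv:2502.16898 — 5 statements merged into one kernel-verified Lean document; each statement's English description precedes it below -/
import Mathlib

section
/- Let A ∈ ℝⁿˣⁿ be symmetric positive definite, b ∈ ℝⁿ, and let each λᵢ(v) = Π_{Cᵢ}(-β Jᵢ v - cᵢ) be the projection of an affine function of v onto a closed convex cone Cᵢ ⊆ ℝ³, with β > 0, Jᵢ ∈ ℝ³ˣⁿ, cᵢ ∈ ℝ³. Then h(v) = ½ vᵀAv - bᵀv + Σᵢ (1/(2β))‖λᵢ(v)‖² is a strongly convex function of v, and its gradient is ∇h(v) = Av - b - Σᵢ Jᵢᵀ λᵢ(v). -/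
open scoped RealInnerProductSpace

section proj
variable {E : Type*} [NormedAddCommGroup E] [InnerProductSpace ℝ E]

lemma my_var_ineq {C : Set E} (hconv : Convex ℝ C) {x p : E} (hp : p ∈ C)
    (hproj : ∀ y ∈ C, dist x p ≤ dist x y) : ∀ y ∈ C, ⟪x - p, y - p⟫ ≤ 0 := by
  haveI : Nonempty C := ⟨⟨p, hp⟩⟩
  refine (norm_eq_iInf_iff_real_inner_le_zero hconv hp).1 ?_
  refine le_antisymm (le_ciInf fun w => ?_)
    (ciInf_le (f := fun w : C => ‖x - w‖) ⟨0, by rintro r ⟨w, rfl⟩; positivity⟩ ⟨p, hp⟩)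
  simpa [dist_eq_norm] using hproj w w.2

lemma my_cone_inner {C : Set E} (hconv : Convex ℝ C)
    (hcone : ∀ t : ℝ, 0 ≤ t → ∀ z ∈ C, t • z ∈ C) {x p : E} (hp : p ∈ C)
    (hproj : ∀ y ∈ C, dist x p ≤ dist x y) : ⟪x, p⟫ = ‖p‖ ^ 2 := by
  have vi := my_var_ineq hconv hp hproj
  have h0 : (0 : E) ∈ C := by simpa using hcone 0 le_rfl p hp
  have h2 : (2 : ℝ) • p ∈ C := hcone 2 (by norm_num) p hp
  have a1 := vi 0 h0
  have a2 := vi _ h2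
  have e2 : (2 : ℝ) • p - p = p := by rw [two_smul]; abel
  rw [e2] at a2
  have a1' : 0 ≤ ⟪x - p, p⟫ := by
    have : ⟪x - p, (0 : E) - p⟫ = -⟪x - p, p⟫ := by simp
    rw [this] at a1; linarith
  have h0' : ⟪x - p, p⟫ = 0 := le_antisymm a2 a1'
  have := inner_sub_left (𝕜 := ℝ) x p p
  rw [h0', real_inner_self_eq_norm_sq] at this
  linarith

lemma my_lower {C : Set E} {x p : E}
    (hproj : ∀ y ∈ C, dist x p ≤ dist x y) (hxp : ⟪x, p⟫ = ‖p‖ ^ 2)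
    {y : E} (hy : y ∈ C) : 2 * ⟪x, y⟫ - ‖y‖ ^ 2 ≤ ‖p‖ ^ 2 := by
  have h := hproj y hy
  rw [dist_eq_norm, dist_eq_norm] at h
  have h2 : ‖x - p‖ ^ 2 ≤ ‖x - y‖ ^ 2 := by nlinarith [norm_nonneg (x - p)]
  have e1 : ‖x - p‖ ^ 2 = ‖x‖ ^ 2 - 2 * ⟪x, p⟫ + ‖p‖ ^ 2 := norm_sub_sq_real x p
  have e2 : ‖x - y‖ ^ 2 = ‖x‖ ^ 2 - 2 * ⟪x, y⟫ + ‖y‖ ^ 2 := norm_sub_sq_real x y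
  nlinarith

lemma my_lip {C : Set E} (hconv : Convex ℝ C) {x y px py : E}
    (hpx : px ∈ C) (hpy : py ∈ C)
    (hprojx : ∀ z ∈ C, dist x px ≤ dist x z)
    (hprojy : ∀ z ∈ C, dist y py ≤ dist y z) : ‖px - py‖ ≤ ‖x - y‖ := by
  have hs := my_var_ineq hconv hpx hprojx py hpy
  have ht := my_var_ineq hconv hpy hprojy px hpx
  have key : ⟪px - py, px - py⟫ - ⟪x - y, px - py⟫ = ⟪x - px, py - px⟫ + ⟪y - py, px - py⟫ := by
    simp only [inner_sub_left, inner_sub_right]; ring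
  have hcs : ⟪x - y, px - py⟫ ≤ ‖x - y‖ * ‖px - py‖ := real_inner_le_norm _ _
  have hn : ⟪px - py, px - py⟫ = ‖px - py‖ ^ 2 := real_inner_self_eq_norm_sq _
  nlinarith [norm_nonneg (px - py), norm_nonneg (x - y)]

lemma my_quad {C : Set E} (hconv : Convex ℝ C)
    (hcone : ∀ t : ℝ, 0 ≤ t → ∀ z ∈ C, t • z ∈ C) {Pf : E → E}
    (hmem : ∀ w, Pf w ∈ C) (hproj : ∀ w, ∀ z ∈ C, dist w (Pf w) ≤ dist w z)
    (x x' : E) :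
    0 ≤ ‖Pf x'‖ ^ 2 - ‖Pf x‖ ^ 2 - 2 * ⟪x' - x, Pf x⟫ ∧
      ‖Pf x'‖ ^ 2 - ‖Pf x‖ ^ 2 - 2 * ⟪x' - x, Pf x⟫ ≤ 2 * ‖x' - x‖ ^ 2 := by
  have hfx := my_cone_inner hconv hcone (hmem x) (hproj x)
  have hfx' := my_cone_inner hconv hcone (hmem x') (hproj x')
  have hlow1 := my_lower (hproj x') hfx' (hmem x)
  have hlow2 := my_lower (hproj x) hfx (hmem x')
  have hlip := my_lip hconv (hmem x') (hmem x) (hproj x') (hproj x)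
  have e1 : ⟪x' - x, Pf x⟫ = ⟪x', Pf x⟫ - ⟪x, Pf x⟫ := inner_sub_left _ _ _
  have e2 : ⟪x' - x, Pf x' - Pf x⟫ = ⟪x', Pf x'⟫ - ⟪x', Pf x⟫ - ⟪x, Pf x'⟫ + ⟪x, Pf x⟫ := by
    simp only [inner_sub_left, inner_sub_right]; ring
  have hcs : ⟪x' - x, Pf x' - Pf x⟫ ≤ ‖x' - x‖ * ‖Pf x' - Pf x‖ := real_inner_le_norm _ _
  have hmul : ‖x' - x‖ * ‖Pf x' - Pf x‖ ≤ ‖x' - x‖ * ‖x' - x‖ :=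
    mul_le_mul_of_nonneg_left hlip (norm_nonneg _)
  constructor <;> nlinarith

lemma my_conv {C : Set E} (hconv : Convex ℝ C)
    (hcone : ∀ t : ℝ, 0 ≤ t → ∀ z ∈ C, t • z ∈ C) {Pf : E → E}
    (hmem : ∀ w, Pf w ∈ C) (hproj : ∀ w, ∀ z ∈ C, dist w (Pf w) ≤ dist w z)
    {a t : ℝ} (ha : 0 ≤ a) (ht : 0 ≤ t) (hat : a + t = 1) (x y : E) :
    ‖Pf (a • x + t • y)‖ ^ 2 ≤ a * ‖Pf x‖ ^ 2 + t * ‖Pf y‖ ^ 2 := by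
  set z := a • x + t • y with hz
  have hm := my_cone_inner hconv hcone (hmem z) (hproj z)
  have hfx := my_cone_inner hconv hcone (hmem x) (hproj x)
  have hfy := my_cone_inner hconv hcone (hmem y) (hproj y)
  have hlx := my_lower (hproj x) hfx (hmem z)
  have hly := my_lower (hproj y) hfy (hmem z)
  have e : ⟪z, Pf z⟫ = a * ⟪x, Pf z⟫ + t * ⟪y, Pf z⟫ := by
    rw [hz, inner_add_left, real_inner_smul_left, real_inner_smul_left]
  nlinarith [mul_le_mul_of_nonneg_left hlx ha, mul_le_mul_of_nonneg_left hly ht]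

end proj

open Matrix in
lemma my_inner_toEuclideanLin {n : ℕ} (A : Matrix (Fin n) (Fin n) ℝ)
    (w : EuclideanSpace ℝ (Fin n)) :
    ⟪w, Matrix.toEuclideanLin A w⟫ =
      dotProduct (star (WithLp.equiv 2 _ w)) (A *ᵥ WithLp.equiv 2 _ w) := by
  simp [PiLp.inner_apply, Matrix.toEuclideanLin_apply, dotProduct, RCLike.inner_apply]
  exact Finset.sum_congr rfl fun _ _ => mul_comm _ _

lemma my_mu {n : ℕ} (A : Matrix (Fin n) (Fin n) ℝ) (hA : A.PosDef) :
    ∃ μ : ℝ, 0 < μ ∧ ∀ w : EuclideanSpace ℝ (Fin n),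
      μ * ‖w‖ ^ 2 ≤ ⟪w, Matrix.toEuclideanLin A w⟫ := by
  have hpos : ∀ w : EuclideanSpace ℝ (Fin n), w ≠ 0 → 0 < ⟪w, Matrix.toEuclideanLin A w⟫ := by
    intro w hw
    rw [my_inner_toEuclideanLin]
    exact hA.dotProduct_mulVec_pos (fun h0 => hw ((WithLp.equiv 2 _).injective (by simpa using h0)))
  rcases Nat.eq_zero_or_pos n with hn | hn
  · subst hn
    refine ⟨1, one_pos, fun w => ?_⟩
    have : w = 0 := by ext i; exact i.elim0
    simp [this]
  · set E := EuclideanSpace ℝ (Fin n)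
    set f : E → ℝ := fun w => ⟪w, Matrix.toEuclideanLin A w⟫ with hf
    have hcont : Continuous f :=
      continuous_id.inner (Matrix.toEuclideanLin A).continuous_of_finiteDimensional
    have hS : (EuclideanSpace.single (⟨0, hn⟩ : Fin n) (1:ℝ)) ∈ Metric.sphere (0:E) 1 := by
      simp [EuclideanSpace.norm_single]
    obtain ⟨u, huS, hmin⟩ := (isCompact_sphere (0:E) 1).exists_isMinOn ⟨_, hS⟩ hcont.continuousOn
    have hun : ‖u‖ = 1 := by simpa using huS
    have hu0 : u ≠ 0 := by intro h0; rw [h0] at hun; simp at hun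
    refine ⟨f u, hpos u hu0, fun w => ?_⟩
    rcases eq_or_ne w 0 with rfl | hw
    · simp [hf]
    · have hwn : (0:ℝ) < ‖w‖ := norm_pos_iff.2 hw
      set u' : E := ‖w‖⁻¹ • w with hu'
      have hu'S : u' ∈ Metric.sphere (0:E) 1 := by
        simp [hu', norm_smul, abs_of_pos (inv_pos.2 hwn), inv_mul_cancel₀ hwn.ne']
      have hle : f u ≤ f u' := hmin hu'S
      have hf' : f u' = ‖w‖⁻¹ * ‖w‖⁻¹ * f w := by
        rw [hf]
        simp only [hu', _root_.map_smul, real_inner_smul_left, real_inner_smul_right, smul_eq_mul]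
        ring
      rw [hf'] at hle
      have h2 : f u * ‖w‖ ^ 2 ≤ f w := by
        have := mul_le_mul_of_nonneg_left hle (le_of_lt (by positivity : (0:ℝ) < ‖w‖ ^ 2))
        calc f u * ‖w‖ ^ 2 = ‖w‖ ^ 2 * f u := by ring
        _ ≤ ‖w‖ ^ 2 * (‖w‖⁻¹ * ‖w‖⁻¹ * f w) := this
        _ = f w := by field_simp
      linarith

set_option maxHeartbeats 2000000 in
open Matrix Finset in
/-- The CANAL potential `h(v) = ½vᵀAv - bᵀv + Σᵢ (1/(2β))‖λᵢ(v)‖²`, where each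
`λᵢ(v)` is the metric projection of the affine map `-βJᵢv - cᵢ` onto a closed
convex cone `Cᵢ ⊆ ℝ³`, is strongly convex with gradient
`∇h(v) = Av - b - Σᵢ Jᵢᵀλᵢ(v)`. -/
theorem stmt4 {n m : ℕ} (A : Matrix (Fin n) (Fin n) ℝ) (hA : A.PosDef)
    (b : EuclideanSpace ℝ (Fin n)) (β : ℝ) (hβ : 0 < β)
    (J : Fin m → Matrix (Fin 3) (Fin n) ℝ) (c : Fin m → EuclideanSpace ℝ (Fin 3))
    (C : Fin m → Set (EuclideanSpace ℝ (Fin 3)))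
    (hne : ∀ i, (C i).Nonempty) (hcl : ∀ i, IsClosed (C i))
    (hconv : ∀ i, Convex ℝ (C i))
    (hcone : ∀ i, ∀ t : ℝ, 0 ≤ t → ∀ x ∈ C i, t • x ∈ C i)
    (P : ∀ _ : Fin m, EuclideanSpace ℝ (Fin 3) → EuclideanSpace ℝ (Fin 3))
    (hPmem : ∀ i x, P i x ∈ C i)
    (hPproj : ∀ i x, ∀ y ∈ C i, dist x (P i x) ≤ dist x y)
    (lam : Fin m → EuclideanSpace ℝ (Fin n) → EuclideanSpace ℝ (Fin 3))
    (hlam : ∀ i v, lam i v = P i (-β • Matrix.toEuclideanLin (J i) v - c i))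
    (h : EuclideanSpace ℝ (Fin n) → ℝ)
    (hh : ∀ v, h v = (1 / 2) * ⟪v, Matrix.toEuclideanLin A v⟫ - ⟪b, v⟫ +
      ∑ i : Fin m, (1 / (2 * β)) * ‖lam i v‖ ^ 2) :
    (∃ μ : ℝ, 0 < μ ∧ StrongConvexOn Set.univ μ h) ∧
    ∀ v, HasGradientAt h
      (Matrix.toEuclideanLin A v - b -
        ∑ i : Fin m, Matrix.toEuclideanLin (J i)ᵀ (lam i v)) v := by
  -- notation
  set X : Fin m → EuclideanSpace ℝ (Fin n) → EuclideanSpace ℝ (Fin 3) :=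
    fun i v => -β • Matrix.toEuclideanLin (J i) v - c i with hX
  have hlam' : ∀ i v, lam i v = P i (X i v) := hlam
  -- symmetry of A
  have hsym : ∀ u w : EuclideanSpace ℝ (Fin n),
      ⟪Matrix.toEuclideanLin A u, w⟫ = ⟪u, Matrix.toEuclideanLin A w⟫ := by
    intro u w
    conv_lhs => rw [← hA.1]
    rw [Matrix.toEuclideanLin_conjTranspose_eq_adjoint, LinearMap.adjoint_inner_left]
  have hsym' : ∀ u w : EuclideanSpace ℝ (Fin n),
      ⟪w, Matrix.toEuclideanLin A u⟫ = ⟪u, Matrix.toEuclideanLin A w⟫ := fun u w => by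
    rw [real_inner_comm, hsym]
  have hadj : ∀ (i : Fin m) (d : EuclideanSpace ℝ (Fin n)) (w : EuclideanSpace ℝ (Fin 3)),
      ⟪Matrix.toEuclideanLin (J i) d, w⟫ = ⟪d, Matrix.toEuclideanLin (J i)ᵀ w⟫ := by
    intro i d w
    rw [← Matrix.conjTranspose_eq_transpose_of_trivial,
      Matrix.toEuclideanLin_conjTranspose_eq_adjoint, LinearMap.adjoint_inner_right]
  have hXd : ∀ (i : Fin m) (v v' : EuclideanSpace ℝ (Fin n)),
      X i v' - X i v = -β • Matrix.toEuclideanLin (J i) (v' - v) := by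
    intro i v v'
    simp only [hX, map_sub, smul_sub]
    abel
  -- continuous linear maps for operator norms
  set Lc : EuclideanSpace ℝ (Fin n) →L[ℝ] EuclideanSpace ℝ (Fin n) :=
    LinearMap.toContinuousLinearMap (Matrix.toEuclideanLin A) with hLc
  set Tc : Fin m → (EuclideanSpace ℝ (Fin n) →L[ℝ] EuclideanSpace ℝ (Fin 3)) :=
    fun i => LinearMap.toContinuousLinearMap (Matrix.toEuclideanLin (J i)) with hTc
  obtain ⟨μ, hμ, hμle⟩ := my_mu A hA
  constructor
  · -- strong convexity
    refine ⟨μ, hμ, convex_univ, ?_⟩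
    intro p _ q _ a t ha ht hat
    simp only [smul_eq_mul]
    rw [hh, hh, hh]
    have ex : ⟪a • p + t • q, Matrix.toEuclideanLin A (a • p + t • q)⟫ =
        a * (a * ⟪p, Matrix.toEuclideanLin A p⟫ + t * ⟪p, Matrix.toEuclideanLin A q⟫) +
        t * (a * ⟪q, Matrix.toEuclideanLin A p⟫ + t * ⟪q, Matrix.toEuclideanLin A q⟫) := by
      simp only [map_add, _root_.map_smul, inner_add_left, inner_add_right,
        real_inner_smul_left, real_inner_smul_right]
      ring
    have exy : ⟪p - q, Matrix.toEuclideanLin A (p - q)⟫ =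
        ⟪p, Matrix.toEuclideanLin A p⟫ - ⟪p, Matrix.toEuclideanLin A q⟫ -
        ⟪q, Matrix.toEuclideanLin A p⟫ + ⟪q, Matrix.toEuclideanLin A q⟫ := by
      simp only [map_sub, inner_sub_left, inner_sub_right]
      ring
    have hQ : a * ⟪p, Matrix.toEuclideanLin A p⟫ + t * ⟪q, Matrix.toEuclideanLin A q⟫ -
        ⟪a • p + t • q, Matrix.toEuclideanLin A (a • p + t • q)⟫ =
        a * t * ⟪p - q, Matrix.toEuclideanLin A (p - q)⟫ := by
      rw [ex, exy, hsym' p q]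
      have ht1 : t = 1 - a := by linarith
      rw [ht1]; ring
    have hbi : ⟪b, a • p + t • q⟫ = a * ⟪b, p⟫ + t * ⟪b, q⟫ := by
      rw [inner_add_right, real_inner_smul_right, real_inner_smul_right]
    have hgi : ∀ i : Fin m, ‖lam i (a • p + t • q)‖ ^ 2 ≤
        a * ‖lam i p‖ ^ 2 + t * ‖lam i q‖ ^ 2 := by
      intro i
      have haff : X i (a • p + t • q) = a • X i p + t • X i q := by
        simp only [hX, map_add, _root_.map_smul]
        have ht1 : t = 1 - a := by linarith
        rw [ht1]
        module
      rw [hlam' i, hlam' i, hlam' i, haff]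
      exact my_conv (hconv i) (hcone i) (hPmem i) (hPproj i) ha ht hat _ _
    have hsum : ∑ i : Fin m, (1 / (2 * β)) * ‖lam i (a • p + t • q)‖ ^ 2 ≤
        a * ∑ i : Fin m, (1 / (2 * β)) * ‖lam i p‖ ^ 2 +
        t * ∑ i : Fin m, (1 / (2 * β)) * ‖lam i q‖ ^ 2 := by
      rw [Finset.mul_sum, Finset.mul_sum, ← Finset.sum_add_distrib]
      refine Finset.sum_le_sum fun i _ => ?_
      have h2β : (0:ℝ) ≤ 1 / (2 * β) := by positivity
      calc (1 / (2 * β)) * ‖lam i (a • p + t • q)‖ ^ 2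
          ≤ (1 / (2 * β)) * (a * ‖lam i p‖ ^ 2 + t * ‖lam i q‖ ^ 2) :=
            mul_le_mul_of_nonneg_left (hgi i) h2β
        _ = a * ((1 / (2 * β)) * ‖lam i p‖ ^ 2) + t * ((1 / (2 * β)) * ‖lam i q‖ ^ 2) := by ring
    have hμQ : a * t * (μ * ‖p - q‖ ^ 2) ≤
        a * t * ⟪p - q, Matrix.toEuclideanLin A (p - q)⟫ :=
      mul_le_mul_of_nonneg_left (hμle (p - q)) (mul_nonneg ha ht)
    linarith
  · -- gradient
    intro v
    rw [hasGradientAt_iff_isLittleO]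
    have key : ∀ v', h v' - h v -
        ⟪Matrix.toEuclideanLin A v - b -
          ∑ i : Fin m, Matrix.toEuclideanLin (J i)ᵀ (lam i v), v' - v⟫ =
        (1 / 2) * ⟪v' - v, Matrix.toEuclideanLin A (v' - v)⟫ +
        ∑ i : Fin m, (1 / (2 * β)) *
          (‖lam i v'‖ ^ 2 - ‖lam i v‖ ^ 2 - 2 * ⟪X i v' - X i v, lam i v⟫) := by
      intro v'
      have hGd : ⟪Matrix.toEuclideanLin A v - b -
            ∑ i : Fin m, Matrix.toEuclideanLin (J i)ᵀ (lam i v), v' - v⟫ =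
          ⟪Matrix.toEuclideanLin A v, v' - v⟫ - ⟪b, v' - v⟫ -
          ∑ i : Fin m, ⟪Matrix.toEuclideanLin (J i)ᵀ (lam i v), v' - v⟫ := by
        rw [inner_sub_left, inner_sub_left, sum_inner]
      have e1 : ⟪v', Matrix.toEuclideanLin A v⟫ = ⟪v, Matrix.toEuclideanLin A v'⟫ := hsym' v v'
      have e2 : ⟪v' - v, Matrix.toEuclideanLin A (v' - v)⟫ =
          ⟪v', Matrix.toEuclideanLin A v'⟫ - ⟪v', Matrix.toEuclideanLin A v⟫ -
          ⟪v, Matrix.toEuclideanLin A v'⟫ + ⟪v, Matrix.toEuclideanLin A v⟫ := by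
        simp only [map_sub, inner_sub_left, inner_sub_right]
        ring
      have e3 : ⟪Matrix.toEuclideanLin A v, v' - v⟫ =
          ⟪v, Matrix.toEuclideanLin A v'⟫ - ⟪v, Matrix.toEuclideanLin A v⟫ := by
        rw [hsym]
        simp [inner_sub_right]
      have hbd : ⟪b, v' - v⟫ = ⟪b, v'⟫ - ⟪b, v⟫ := inner_sub_right _ _ _
      have hperi : ∀ i : Fin m, (1 / (2 * β)) *
          (‖lam i v'‖ ^ 2 - ‖lam i v‖ ^ 2 - 2 * ⟪X i v' - X i v, lam i v⟫) =
          (1 / (2 * β)) * ‖lam i v'‖ ^ 2 - (1 / (2 * β)) * ‖lam i v‖ ^ 2 +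
          ⟪Matrix.toEuclideanLin (J i)ᵀ (lam i v), v' - v⟫ := by
        intro i
        have hip : ⟪X i v' - X i v, lam i v⟫ =
            -β * ⟪Matrix.toEuclideanLin (J i)ᵀ (lam i v), v' - v⟫ := by
          rw [hXd i v v', real_inner_smul_left, hadj i (v' - v) (lam i v), real_inner_comm]
        rw [hip]
        field_simp
        ring
      rw [hh v', hh v, hGd, hbd,
        Finset.sum_congr rfl (fun i _ => hperi i),
        Finset.sum_add_distrib, Finset.sum_sub_distrib]
      linarith [e1, e2, e3]
    set K : ℝ := ‖Lc‖ / 2 + ∑ i : Fin m, β * ‖Tc i‖ ^ 2 with hK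
    have hbound : ∀ v', |h v' - h v -
        ⟪Matrix.toEuclideanLin A v - b -
          ∑ i : Fin m, Matrix.toEuclideanLin (J i)ᵀ (lam i v), v' - v⟫| ≤
        K * ‖v' - v‖ ^ 2 := by
      intro v'
      rw [key v']
      have h1 : |(1 / 2) * ⟪v' - v, Matrix.toEuclideanLin A (v' - v)⟫| ≤
          (‖Lc‖ / 2) * ‖v' - v‖ ^ 2 := by
        have hcs := abs_real_inner_le_norm (v' - v) (Matrix.toEuclideanLin A (v' - v))
        have hop : ‖Matrix.toEuclideanLin A (v' - v)‖ ≤ ‖Lc‖ * ‖v' - v‖ :=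
          Lc.le_opNorm (v' - v)
        rw [abs_mul, abs_of_nonneg (by norm_num : (0:ℝ) ≤ 1/2)]
        nlinarith [norm_nonneg (v' - v), abs_nonneg (⟪v' - v, Matrix.toEuclideanLin A (v' - v)⟫)]
      have h2 : ∀ i : Fin m, |(1 / (2 * β)) *
          (‖lam i v'‖ ^ 2 - ‖lam i v‖ ^ 2 - 2 * ⟪X i v' - X i v, lam i v⟫)| ≤
          β * ‖Tc i‖ ^ 2 * ‖v' - v‖ ^ 2 := by
        intro i
        have hq := my_quad (hconv i) (hcone i) (hPmem i) (hPproj i) (X i v) (X i v')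
        rw [← hlam' i v, ← hlam' i v'] at hq
        obtain ⟨hql, hqu⟩ := hq
        have hx : ‖X i v' - X i v‖ ≤ β * (‖Tc i‖ * ‖v' - v‖) := by
          rw [hXd i v v', norm_smul]
          simp only [norm_neg, Real.norm_eq_abs, abs_of_pos hβ]
          exact mul_le_mul_of_nonneg_left ((Tc i).le_opNorm (v' - v)) hβ.le
        have hxn : (0:ℝ) ≤ ‖X i v' - X i v‖ := norm_nonneg _
        have h2b : (0:ℝ) < 1 / (2 * β) := by positivity
        rw [abs_mul, abs_of_pos h2b, abs_of_nonneg hql]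
        have hsq : ‖X i v' - X i v‖ ^ 2 ≤ (β * (‖Tc i‖ * ‖v' - v‖)) ^ 2 := by
          nlinarith [norm_nonneg (Tc i), norm_nonneg (v' - v)]
        calc (1 / (2 * β)) * (‖lam i v'‖ ^ 2 - ‖lam i v‖ ^ 2 -
              2 * ⟪X i v' - X i v, lam i v⟫)
            ≤ (1 / (2 * β)) * (2 * ‖X i v' - X i v‖ ^ 2) :=
              mul_le_mul_of_nonneg_left hqu h2b.le
          _ ≤ (1 / (2 * β)) * (2 * (β * (‖Tc i‖ * ‖v' - v‖)) ^ 2) := by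
              nlinarith [h2b]
          _ = β * ‖Tc i‖ ^ 2 * ‖v' - v‖ ^ 2 := by field_simp
      calc |(1 / 2) * ⟪v' - v, Matrix.toEuclideanLin A (v' - v)⟫ +
            ∑ i : Fin m, (1 / (2 * β)) *
              (‖lam i v'‖ ^ 2 - ‖lam i v‖ ^ 2 - 2 * ⟪X i v' - X i v, lam i v⟫)|
          ≤ |(1 / 2) * ⟪v' - v, Matrix.toEuclideanLin A (v' - v)⟫| +
            ∑ i : Fin m, |(1 / (2 * β)) *
              (‖lam i v'‖ ^ 2 - ‖lam i v‖ ^ 2 - 2 * ⟪X i v' - X i v, lam i v⟫)| :=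
            (abs_add_le _ _).trans (by
              gcongr
              exact Finset.abs_sum_le_sum_abs _ _)
        _ ≤ (‖Lc‖ / 2) * ‖v' - v‖ ^ 2 + ∑ i : Fin m, β * ‖Tc i‖ ^ 2 * ‖v' - v‖ ^ 2 :=
            add_le_add h1 (Finset.sum_le_sum fun i _ => h2 i)
        _ = K * ‖v' - v‖ ^ 2 := by rw [hK, add_mul, Finset.sum_mul]
    have hO : (fun v' => h v' - h v -
        ⟪Matrix.toEuclideanLin A v - b -
          ∑ i : Fin m, Matrix.toEuclideanLin (J i)ᵀ (lam i v), v' - v⟫) =O[nhds v]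
        fun v' => ‖v' - v‖ ^ 2 :=
      Asymptotics.IsBigO.of_bound K (Filter.Eventually.of_forall fun v' => by
        simpa [Real.norm_eq_abs, abs_of_nonneg (sq_nonneg (‖v' - v‖))] using hbound v')
    have htend : Filter.Tendsto (fun v' => v' - v) (nhds v) (nhds 0) :=
      tendsto_sub_nhds_zero_iff.mpr Filter.tendsto_id
    exact hO.trans_isLittleO
      ((Asymptotics.isLittleO_norm_pow_id one_lt_two).comp_tendsto htend)
end

section
/- For μ > 0, unit vector λ̄ₜ ∈ ℝ², and scalars λₙ* ∈ ℝ, ‖λₜ*‖ > 0 with μλₙ* < ‖λₜ*‖ and λₙ* + μ‖λₜ*‖ > 0 (the slip case), the 3×3 matrix D = (1/(μ²+1)) [[μ² I₂ + (μλₙ*/‖λₜ*‖) P(λ̄ₜ), μλ̄ₜ], [μλ̄ₜᵀ, 1]], where P(λ̄ₜ) = I₂ - λ̄ₜλ̄ₜᵀ, is symmetric positive semidefinite. -/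
open Matrix

/-- The slip-case generalized derivative block of the friction-cone projection
is symmetric positive semidefinite. Here `t` is the unit tangential direction
`λ̄ₜ`, `ln` is `λₙ*`, and `s = ‖λₜ*‖ > 0` with `μ ln < s` and `ln + μ s > 0`. -/
theorem stmt6 (μ : ℝ) (hμ : 0 < μ) (t : Fin 2 → ℝ) (ht : (t 0) ^ 2 + (t 1) ^ 2 = 1)
    (ln s : ℝ) (hs : 0 < s) (hslip₁ : μ * ln < s) (hslip₂ : 0 < ln + μ * s) :
    ((1 / (μ ^ 2 + 1)) •
      !![μ ^ 2 + (μ * ln / s) * (1 - (t 0) ^ 2), -(μ * ln / s) * (t 0 * t 1), μ * t 0;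
         -(μ * ln / s) * (t 0 * t 1), μ ^ 2 + (μ * ln / s) * (1 - (t 1) ^ 2), μ * t 1;
         μ * t 0, μ * t 1, 1] : Matrix (Fin 3) (Fin 3) ℝ).PosSemidef := by
  have ha : 0 ≤ μ ^ 2 + μ * ln / s := by
    have : μ ^ 2 + μ * ln / s = μ * (ln + μ * s) / s := by field_simp; ring
    rw [this]
    positivity
  have hc : (0:ℝ) ≤ 1 / (μ ^ 2 + 1) := by positivity
  rw [Matrix.posSemidef_iff_dotProduct_mulVec]
  constructor
  · unfold Matrix.IsHermitian
    ext i j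
    fin_cases i <;> fin_cases j <;>
      simp [Matrix.conjTranspose_apply, mul_comm]
  · intro x
    simp only [Matrix.smul_mulVec, dotProduct_smul, smul_eq_mul,
      Matrix.mulVec, dotProduct, Fin.sum_univ_three, Matrix.cons_val',
      Matrix.cons_val_zero, Matrix.cons_val_one, Matrix.head_cons, Matrix.empty_val',
      Matrix.cons_val_fin_one, Matrix.head_fin_const, star_trivial, Pi.star_apply,
      RCLike.star_def, Matrix.of_apply, Matrix.smul_apply, Matrix.cons_val_two, Matrix.tail_cons]
    have key : (μ ^ 2 + (μ * ln / s) * (1 - (t 0) ^ 2)) * x 0 * x 0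
        + (-(μ * ln / s) * (t 0 * t 1)) * x 1 * x 0 + (μ * t 0) * x 2 * x 0
        + ((-(μ * ln / s) * (t 0 * t 1)) * x 0 + (μ ^ 2 + (μ * ln / s) * (1 - (t 1) ^ 2)) * x 1
          + (μ * t 1) * x 2) * x 1
        + ((μ * t 0) * x 0 + (μ * t 1) * x 1 + 1 * x 2) * x 2
        = (μ * (t 0 * x 0 + t 1 * x 1) + x 2) ^ 2
          + (μ ^ 2 + μ * ln / s) * (t 1 * x 0 - t 0 * x 1) ^ 2 := by
      linear_combination (-(μ ^ 2 + μ * ln / s) * (x 0 ^ 2 + x 1 ^ 2)) * ht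
    have h0 : 0 ≤ (μ * (t 0 * x 0 + t 1 * x 1) + x 2) ^ 2
        + (μ ^ 2 + μ * ln / s) * (t 1 * x 0 - t 0 * x 1) ^ 2 := by positivity
    nlinarith [mul_nonneg hc h0, key]
end

section
/- Let μ > 0, C = {(λₜ, λₙ) ∈ ℝ²×ℝ : ‖λₜ‖ ≤ μλₙ}, and let (z, λ) ∈ ℝ³ × ℝ³ with components zₜ ∈ ℝ², zₙ ∈ ℝ and λₜ ∈ ℝ², λₙ ∈ ℝ. Then the Signorini–Coulomb conditions — (i) 0 ≤ λₙ ⊥ zₙ ≥ 0, (ii) there exists δ ≥ 0 with 0 ≤ δ ⊥ (μλₙ - ‖λₜ‖) ≥ 0 and δλₜ + μλₙ zₜ = 0 — hold if and only if λ ∈ C, z + (0, 0, μ‖zₜ‖) ∈ C*, and ⟨λ, z + (0,0,μ‖zₜ‖)⟩ = 0, where C* is the dual cone of C. -/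
private lemma aux_cs (z0 z1 x0 x1 b c : ℝ) (hb0 : 0 ≤ b) (hc0 : 0 ≤ c)
    (hb : b ^ 2 = z0 ^ 2 + z1 ^ 2) (hc : c ^ 2 = x0 ^ 2 + x1 ^ 2) :
    -(b * c) ≤ z0 * x0 + z1 * x1 := by
  have hbc : (b * c) ^ 2 = (z0 ^ 2 + z1 ^ 2) * (x0 ^ 2 + x1 ^ 2) := by
    rw [mul_pow, hb, hc]
  have hsq : (z0 * x0 + z1 * x1) ^ 2 ≤ (b * c) ^ 2 := by
    nlinarith [sq_nonneg (z0 * x1 - z1 * x0)]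
  nlinarith [mul_nonneg hb0 hc0]

private lemma aux_dual (μ z0 z1 z2 b x0 x1 x2 c : ℝ) (hμ : 0 < μ)
    (hz2 : 0 ≤ z2) (hb0 : 0 ≤ b) (hb : b ^ 2 = z0 ^ 2 + z1 ^ 2)
    (hc0 : 0 ≤ c) (hc : c ^ 2 = x0 ^ 2 + x1 ^ 2) (hx : c ≤ μ * x2) :
    0 ≤ z0 * x0 + z1 * x1 + (z2 + μ * b) * x2 := by
  have hx2 : 0 ≤ x2 := by nlinarith
  have hcs := aux_cs z0 z1 x0 x1 b c hb0 hc0 hb hc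
  have hbx : b * c ≤ b * (μ * x2) := mul_le_mul_of_nonneg_left hx hb0
  nlinarith [mul_nonneg hz2 hx2]

private lemma aux_fwd_ip (μ l0 l1 l2 z0 z1 z2 a b δ : ℝ) (hμ : 0 < μ)
    (hl2 : 0 ≤ l2) (hlz : l2 * z2 = 0) (hδ0 : 0 ≤ δ)
    (hCm : 0 ≤ μ * l2 - a) (hcomp : δ * (μ * l2 - a) = 0)
    (h0 : δ * l0 + μ * l2 * z0 = 0) (h1 : δ * l1 + μ * l2 * z1 = 0)
    (ha0 : 0 ≤ a) (ha : a ^ 2 = l0 ^ 2 + l1 ^ 2)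
    (hb0 : 0 ≤ b) (hb : b ^ 2 = z0 ^ 2 + z1 ^ 2) :
    l0 * z0 + l1 * z1 + l2 * (z2 + μ * b) = 0 := by
  have hsq : (μ * l2 * b) ^ 2 = (δ * a) ^ 2 := by
    linear_combination μ ^ 2 * l2 ^ 2 * hb - δ ^ 2 * ha -
      (δ * l0 - μ * l2 * z0) * h0 - (δ * l1 - μ * l2 * z1) * h1
  have hml : 0 ≤ μ * l2 := by positivity
  have heq : μ * l2 * b = δ * a := by
    have h1' : 0 ≤ μ * l2 * b := mul_nonneg hml hb0
    have h2' : 0 ≤ δ * a := mul_nonneg hδ0 ha0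
    rcases sq_eq_sq_iff_eq_or_eq_neg.mp hsq with h | h
    · exact h
    · linarith
  have hkey : μ * l2 * (l0 * z0 + l1 * z1 + l2 * (z2 + μ * b)) = 0 := by
    linear_combination l0 * h0 + l1 * h1 + δ * ha + μ * l2 * hlz +
      μ * l2 * heq + a * hcomp
  rcases eq_or_lt_of_le hml with hml0 | hmlpos
  · have hl2' : l2 = 0 := by
      rcases mul_eq_zero.mp hml0.symm with h | h
      · exact absurd h hμ.ne'
      · exact h
    have ha' : a = 0 := le_antisymm (by rw [hl2'] at hCm; linarith) ha0
    have h00 : l0 = 0 := by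
      have : l0 ^ 2 = 0 := le_antisymm (by nlinarith [sq_nonneg l1]) (sq_nonneg _)
      exact pow_eq_zero_iff two_ne_zero |>.mp this
    have h11 : l1 = 0 := by
      have : l1 ^ 2 = 0 := le_antisymm (by nlinarith [sq_nonneg l0]) (sq_nonneg _)
      exact pow_eq_zero_iff two_ne_zero |>.mp this
    rw [h00, h11, hl2']; ring
  · rcases mul_eq_zero.mp hkey with h | h
    · exact absurd h (ne_of_gt hmlpos)
    · exact h

private lemma aux_bwd (μ l0 l1 l2 z0 z1 z2 a b : ℝ) (hμ : 0 < μ)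
    (haC : a ≤ μ * l2) (hz2 : 0 ≤ z2)
    (hip : l0 * z0 + l1 * z1 + l2 * (z2 + μ * b) = 0)
    (ha0 : 0 ≤ a) (ha : a ^ 2 = l0 ^ 2 + l1 ^ 2)
    (hb0 : 0 ≤ b) (hb : b ^ 2 = z0 ^ 2 + z1 ^ 2) :
    l2 * z2 = 0 ∧ b * (μ * l2 - a) = 0 ∧
      b * l0 + μ * l2 * z0 = 0 ∧ b * l1 + μ * l2 * z1 = 0 := by
  have hl2 : 0 ≤ l2 := by nlinarith
  have hcs := aux_cs l0 l1 z0 z1 a b ha0 hb0 ha hb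
  have hab : a * b ≤ μ * l2 * b := mul_le_mul_of_nonneg_right haC hb0
  have hlz : l2 * z2 = 0 :=
    le_antisymm (by nlinarith) (mul_nonneg hl2 hz2)
  have habeq : a * b = μ * l2 * b := le_antisymm hab (by nlinarith)
  have hdoteq : l0 * z0 + l1 * z1 = -(a * b) := by nlinarith
  have key : (b * l0 + a * z0) ^ 2 + (b * l1 + a * z1) ^ 2 = 0 := by
    linear_combination (-(b ^ 2)) * ha + (-(a ^ 2)) * hb + 2 * a * b * hdoteq
  have k0 : b * l0 + a * z0 = 0 := by
    have : (b * l0 + a * z0) ^ 2 = 0 :=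
      le_antisymm (by nlinarith [sq_nonneg (b * l1 + a * z1)]) (sq_nonneg _)
    exact pow_eq_zero_iff two_ne_zero |>.mp this
  have k1 : b * l1 + a * z1 = 0 := by
    have : (b * l1 + a * z1) ^ 2 = 0 :=
      le_antisymm (by nlinarith [sq_nonneg (b * l0 + a * z0)]) (sq_nonneg _)
    exact pow_eq_zero_iff two_ne_zero |>.mp this
  refine ⟨hlz, by linarith, ?_, ?_⟩
  · rcases eq_or_lt_of_le hb0 with hb' | hb'
    · have hz0 : z0 = 0 := by
        have : z0 ^ 2 = 0 := le_antisymm (by nlinarith [sq_nonneg z1]) (sq_nonneg _)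
        exact pow_eq_zero_iff two_ne_zero |>.mp this
      rw [← hb', hz0]; ring
    · have hma : a = μ * l2 := mul_right_cancel₀ (ne_of_gt hb') habeq
      rw [← hma]; linarith
  · rcases eq_or_lt_of_le hb0 with hb' | hb'
    · have hz1 : z1 = 0 := by
        have : z1 ^ 2 = 0 := le_antisymm (by nlinarith [sq_nonneg z0]) (sq_nonneg _)
        exact pow_eq_zero_iff two_ne_zero |>.mp this
      rw [← hb', hz1]; ring
    · have hma : a = μ * l2 := mul_right_cancel₀ (ne_of_gt hb') habeq
      rw [← hma]; linarith
open scoped RealInnerProductSpace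

private lemma inner3' (x y : EuclideanSpace ℝ (Fin 3)) :
    ⟪x, y⟫ = x 0 * y 0 + x 1 * y 1 + x 2 * y 2 := by
  simp [PiLp.inner_apply, Fin.sum_univ_three, RCLike.inner_apply, mul_comm]

/-- De Saxcé equivalence: the Signorini–Coulomb conditions hold iff
`λ ∈ C`, `z + (0,0,μ‖zₜ‖) ∈ C*` and `⟪λ, z + (0,0,μ‖zₜ‖)⟫ = 0`, where `C` is
the friction cone and `C*` its dual cone. -/
theorem stmt10 (μ : ℝ) (hμ : 0 < μ) (z lam : EuclideanSpace ℝ (Fin 3)) :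
    let C : Set (EuclideanSpace ℝ (Fin 3)) :=
      {x | Real.sqrt ((x 0) ^ 2 + (x 1) ^ 2) ≤ μ * x 2}
    let Cstar : Set (EuclideanSpace ℝ (Fin 3)) := {w | ∀ x ∈ C, 0 ≤ ⟪w, x⟫}
    let p : EuclideanSpace ℝ (Fin 3) :=
      EuclideanSpace.single 2 (μ * Real.sqrt ((z 0) ^ 2 + (z 1) ^ 2))
    ((0 ≤ lam 2 ∧ 0 ≤ z 2 ∧ lam 2 * z 2 = 0) ∧
      ∃ δ : ℝ, 0 ≤ δ ∧
        0 ≤ μ * lam 2 - Real.sqrt ((lam 0) ^ 2 + (lam 1) ^ 2) ∧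
        δ * (μ * lam 2 - Real.sqrt ((lam 0) ^ 2 + (lam 1) ^ 2)) = 0 ∧
        δ * lam 0 + μ * lam 2 * z 0 = 0 ∧ δ * lam 1 + μ * lam 2 * z 1 = 0) ↔
    (lam ∈ C ∧ z + p ∈ Cstar ∧ ⟪lam, z + p⟫ = 0) := by
  intro C Cstar p
  have hp0 : p 0 = 0 := by simp [p, EuclideanSpace.single_apply]
  have hp1 : p 1 = 0 := by simp [p, EuclideanSpace.single_apply]
  have hp2 : p 2 = μ * Real.sqrt ((z 0) ^ 2 + (z 1) ^ 2) := by
    simp [p, EuclideanSpace.single_apply]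
  set a := Real.sqrt ((lam 0) ^ 2 + (lam 1) ^ 2) with ha_def
  set b := Real.sqrt ((z 0) ^ 2 + (z 1) ^ 2) with hb_def
  have ha0 : 0 ≤ a := Real.sqrt_nonneg _
  have hb0 : 0 ≤ b := Real.sqrt_nonneg _
  have ha : a ^ 2 = (lam 0) ^ 2 + (lam 1) ^ 2 := Real.sq_sqrt (by positivity)
  have hb : b ^ 2 = (z 0) ^ 2 + (z 1) ^ 2 := Real.sq_sqrt (by positivity)
  have hw0 : (z + p) 0 = z 0 := by simp [hp0]
  have hw1 : (z + p) 1 = z 1 := by simp [hp1]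
  have hw2 : (z + p) 2 = z 2 + μ * b := by simp [hp2]
  have hinner : ⟪lam, z + p⟫ =
      lam 0 * z 0 + lam 1 * z 1 + lam 2 * (z 2 + μ * b) := by
    rw [inner3', hw0, hw1, hw2]
  constructor
  · rintro ⟨⟨hl2, hz2, hlz⟩, δ, hδ0, hCm, hcomp, h0, h1⟩
    refine ⟨(by linarith : a ≤ μ * lam 2), ?_, ?_⟩
    · intro x hx
      have hx' : Real.sqrt ((x 0) ^ 2 + (x 1) ^ 2) ≤ μ * x 2 := hx
      rw [inner3', hw0, hw1, hw2]
      exact aux_dual μ (z 0) (z 1) (z 2) b (x 0) (x 1) (x 2) _ hμ hz2 hb0 hb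
        (Real.sqrt_nonneg _) (Real.sq_sqrt (by positivity)) hx'
    · rw [hinner]
      exact aux_fwd_ip μ (lam 0) (lam 1) (lam 2) (z 0) (z 1) (z 2) a b δ hμ
        hl2 hlz hδ0 hCm hcomp h0 h1 ha0 ha hb0 hb
  · rintro ⟨hlamC, hdual, hip⟩
    have haC : a ≤ μ * lam 2 := hlamC
    rw [hinner] at hip
    have hz2 : 0 ≤ z 2 := by
      rcases eq_or_lt_of_le hb0 with hb' | hb'
      · set e : EuclideanSpace ℝ (Fin 3) := WithLp.toLp 2 ![(0:ℝ), 0, 1] with he_def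
        have he0 : e 0 = 0 := rfl
        have he1 : e 1 = 0 := rfl
        have he2 : e 2 = 1 := rfl
        have heC : e ∈ C := by
          show Real.sqrt (e 0 ^ 2 + e 1 ^ 2) ≤ μ * e 2
          rw [he0, he1, he2]
          norm_num
          positivity
        have h := hdual e heC
        rw [inner3', hw0, hw1, hw2, he0, he1, he2] at h
        have hmb : μ * b = 0 := by rw [← hb']; ring
        linarith
      · set x : EuclideanSpace ℝ (Fin 3) := WithLp.toLp 2 ![-(z 0), -(z 1), b / μ] with hx_def
        have hx0 : x 0 = -(z 0) := rfl
        have hx1 : x 1 = -(z 1) := rfl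
        have hx2 : x 2 = b / μ := rfl
        have hxC : x ∈ C := by
          show Real.sqrt (x 0 ^ 2 + x 1 ^ 2) ≤ μ * x 2
          rw [hx0, hx1, hx2]
          have h1 : (-(z 0)) ^ 2 + (-(z 1)) ^ 2 = b ^ 2 := by rw [hb]; ring
          rw [h1, Real.sqrt_sq hb0]
          have h2 : μ * (b / μ) = b := by field_simp
          rw [h2]
        have h := hdual x hxC
        rw [inner3', hw0, hw1, hw2, hx0, hx1, hx2] at h
        have hμb : μ * (z 0 * -(z 0) + z 1 * -(z 1) + (z 2 + μ * b) * (b / μ)) = z 2 * b := by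
          field_simp
          linear_combination μ * hb
        nlinarith [mul_nonneg hμ.le h]
    obtain ⟨hlz, hbcomp, k0, k1⟩ :=
      aux_bwd μ (lam 0) (lam 1) (lam 2) (z 0) (z 1) (z 2) a b hμ haC hz2 hip ha0 ha hb0 hb
    have hl2 : 0 ≤ lam 2 := by nlinarith
    exact ⟨⟨hl2, hz2, hlz⟩, b, hb0, by linarith, by linarith [hbcomp], k0, k1⟩
end

section
/- Let β > 0, μ > 0, and λ* = (λₜ*, λₙ*) ∈ ℝ² × ℝ. Define λ by the strict (nested) projection: λₙ = max(λₙ*, 0), and λₜ = λₜ* if ‖λₜ*‖ ≤ μλₙ, else λₜ = μλₙ · λₜ*/‖λₜ*‖. Define z by βz = λ - λ*. Then (z, λ) is the unique pair satisfying βz = λ - λ* together with the Signorini–Coulomb condition: 0 ≤ λₙ ⊥ zₙ ≥ 0, and there exists δ ≥ 0 with 0 ≤ δ ⊥ (μλₙ - ‖λₜ‖) ≥ 0 and δλₜ + μλₙ zₜ = 0. -/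
/-- The Signorini–Coulomb condition on a pair `(z, λ)` in `ℝ³` (tangential
components `0,1`, normal component `2`). -/
def SCC (μ : ℝ) (z lam : Fin 3 → ℝ) : Prop :=
  (0 ≤ lam 2 ∧ 0 ≤ z 2 ∧ lam 2 * z 2 = 0) ∧
  ∃ δ : ℝ, 0 ≤ δ ∧
    0 ≤ μ * lam 2 - Real.sqrt ((lam 0) ^ 2 + (lam 1) ^ 2) ∧
    δ * (μ * lam 2 - Real.sqrt ((lam 0) ^ 2 + (lam 1) ^ 2)) = 0 ∧
    δ * lam 0 + μ * lam 2 * z 0 = 0 ∧ δ * lam 1 + μ * lam 2 * z 1 = 0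

/-- The strict (nested) friction-cone projection of `λ*`: clamp the normal
component, then radially project the tangential part onto the disk of radius
`μλₙ`. -/
noncomputable def strictProj (μ : ℝ) (lstar : Fin 3 → ℝ) : Fin 3 → ℝ :=
  fun i =>
    if i = 2 then max (lstar 2) 0
    else if Real.sqrt ((lstar 0) ^ 2 + (lstar 1) ^ 2) ≤ μ * max (lstar 2) 0 then
      lstar i
    else
      μ * max (lstar 2) 0 * lstar i / Real.sqrt ((lstar 0) ^ 2 + (lstar 1) ^ 2)

lemma sp2 (μ : ℝ) (lstar : Fin 3 → ℝ) : strictProj μ lstar 2 = max (lstar 2) 0 := by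
  simp [strictProj]

lemma sp0 (μ : ℝ) (lstar : Fin 3 → ℝ) :
    strictProj μ lstar 0 =
      if Real.sqrt ((lstar 0) ^ 2 + (lstar 1) ^ 2) ≤ μ * max (lstar 2) 0 then lstar 0
      else μ * max (lstar 2) 0 * lstar 0 / Real.sqrt ((lstar 0) ^ 2 + (lstar 1) ^ 2) := by
  simp [strictProj, show (0 : Fin 3) ≠ 2 by decide]

lemma sp1 (μ : ℝ) (lstar : Fin 3 → ℝ) :
    strictProj μ lstar 1 =
      if Real.sqrt ((lstar 0) ^ 2 + (lstar 1) ^ 2) ≤ μ * max (lstar 2) 0 then lstar 1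
      else μ * max (lstar 2) 0 * lstar 1 / Real.sqrt ((lstar 0) ^ 2 + (lstar 1) ^ 2) := by
  simp [strictProj, show (1 : Fin 3) ≠ 2 by decide]

set_option maxHeartbeats 1000000 in
/-- Proposition 2 of the paper: under the relation `βz = λ - λ*` with `β > 0`,
the strict projection yields the unique solution of the Signorini–Coulomb
condition. -/
theorem stmt11 (β μ : ℝ) (hβ : 0 < β) (hμ : 0 < μ) (lstar : Fin 3 → ℝ) :
    let lam := strictProj μ lstar
    let z : Fin 3 → ℝ := fun i => (lam i - lstar i) / β
    (∀ i, β * z i = lam i - lstar i) ∧ SCC μ z lam ∧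
    ∀ z' lam' : Fin 3 → ℝ, (∀ i, β * z' i = lam' i - lstar i) →
      SCC μ z' lam' → lam' = lam ∧ z' = z := by
  intro lam z
  have hβ' : β ≠ 0 := ne_of_gt hβ
  set n : ℝ := max (lstar 2) 0 with hn
  set r : ℝ := Real.sqrt ((lstar 0) ^ 2 + (lstar 1) ^ 2) with hr
  have hr0 : 0 ≤ r := Real.sqrt_nonneg _
  have hr2 : r ^ 2 = (lstar 0) ^ 2 + (lstar 1) ^ 2 := Real.sq_sqrt (by positivity)
  have hn0 : 0 ≤ n := le_max_right _ _
  have hn2 : lstar 2 ≤ n := le_max_left _ _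
  have hlam2 : lam 2 = n := sp2 μ lstar
  have hlam0 : lam 0 = if r ≤ μ * n then lstar 0 else μ * n * lstar 0 / r := sp0 μ lstar
  have hlam1 : lam 1 = if r ≤ μ * n then lstar 1 else μ * n * lstar 1 / r := sp1 μ lstar
  have hzdef : ∀ i, z i = (lam i - lstar i) / β := fun i => rfl
  have hrel : ∀ i, β * z i = lam i - lstar i := by
    intro i; rw [hzdef i]; field_simp
  refine ⟨hrel, ?_, ?_⟩
  · -- SCC holds for (z, lam)
    constructor
    · refine ⟨by rw [hlam2]; exact hn0, ?_, ?_⟩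
      · rw [hzdef, hlam2]; exact div_nonneg (by linarith) hβ.le
      · rw [hzdef, hlam2]
        rcases le_or_gt 0 (lstar 2) with h | h
        · rw [hn, max_eq_left h]; ring
        · rw [hn, max_eq_right h.le]; ring
    · by_cases hcase : r ≤ μ * n
      · refine ⟨0, le_refl 0, ?_, by ring, ?_, ?_⟩
        · rw [hlam0, hlam1, if_pos hcase, if_pos hcase, hlam2, ← hr]; linarith
        · rw [hzdef, hlam0, if_pos hcase]; ring
        · rw [hzdef, hlam1, if_pos hcase]; ring
      · push_neg at hcase
        have hrpos : 0 < r := lt_of_le_of_lt (by positivity) hcase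
        have hsq : (lam 0) ^ 2 + (lam 1) ^ 2 = (μ * n) ^ 2 := by
          rw [hlam0, hlam1, if_neg (not_le.mpr hcase), if_neg (not_le.mpr hcase)]
          field_simp
          nlinarith [hr2]
        have hsqrt : Real.sqrt ((lam 0) ^ 2 + (lam 1) ^ 2) = μ * n := by
          rw [hsq]; exact Real.sqrt_sq (by positivity)
        refine ⟨(r - μ * n) / β, div_nonneg (by linarith) hβ.le, ?_, ?_, ?_, ?_⟩
        · rw [hsqrt, hlam2]; linarith
        · rw [hsqrt, hlam2]; ring
        · rw [hzdef, hlam2, hlam0, if_neg (not_le.mpr hcase)]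
          field_simp; ring
        · rw [hzdef, hlam2, hlam1, if_neg (not_le.mpr hcase)]
          field_simp; ring
  · -- uniqueness
    rintro z' lam' hz' ⟨⟨h1, h2, h3⟩, δ, hδ, h4, h5, h6, h7⟩
    have hd2 : lam' 2 - lstar 2 = β * z' 2 := (hz' 2).symm
    have hge : 0 ≤ lam' 2 - lstar 2 := by rw [hd2]; exact mul_nonneg hβ.le h2
    have hprod : lam' 2 * (lam' 2 - lstar 2) = 0 := by
      rw [hd2]; linear_combination β * h3
    have hlam'2 : lam' 2 = n := by
      rcases mul_eq_zero.mp hprod with h | h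
      · have hls : lstar 2 ≤ 0 := by linarith
        rw [hn, max_eq_right hls, h]
      · have h' : lam' 2 = lstar 2 := by linarith
        have : 0 ≤ lstar 2 := h' ▸ h1
        rw [hn, max_eq_left this, h']
    rw [hlam'2] at h4 h5 h6 h7
    set s : ℝ := Real.sqrt ((lam' 0) ^ 2 + (lam' 1) ^ 2) with hs
    have hs0 : 0 ≤ s := Real.sqrt_nonneg _
    have hs2 : s ^ 2 = (lam' 0) ^ 2 + (lam' 1) ^ 2 := Real.sq_sqrt (by positivity)
    have key0 : (δ * β + μ * n) * lam' 0 = μ * n * lstar 0 := by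
      linear_combination β * h6 - μ * n * (hz' 0)
    have key1 : (δ * β + μ * n) * lam' 1 = μ * n * lstar 1 := by
      linear_combination β * h7 - μ * n * (hz' 1)
    have hlam'eq : lam' = lam := by
      by_cases hnz : n = 0
      · -- normal force zero: tangential forces vanish
        have hsz : s = 0 := le_antisymm (by rw [hnz] at h4; linarith) hs0
        have hsum : (lam' 0) ^ 2 + (lam' 1) ^ 2 = 0 := by rw [← hs2, hsz]; ring
        have h00 : lam' 0 = 0 := by nlinarith [sq_nonneg (lam' 0), sq_nonneg (lam' 1)]
        have h01 : lam' 1 = 0 := by nlinarith [sq_nonneg (lam' 0), sq_nonneg (lam' 1)]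
        have hlz : lam 0 = 0 ∧ lam 1 = 0 := by
          by_cases hc : r ≤ μ * n
          · rw [hnz] at hc
            have hrz : r = 0 := le_antisymm (by linarith) hr0
            have : (lstar 0) ^ 2 + (lstar 1) ^ 2 = 0 := by rw [← hr2, hrz]; ring
            have e0 : lstar 0 = 0 := by nlinarith [sq_nonneg (lstar 0), sq_nonneg (lstar 1)]
            have e1 : lstar 1 = 0 := by nlinarith [sq_nonneg (lstar 0), sq_nonneg (lstar 1)]
            rw [hlam0, hlam1, if_pos (by rw [hnz]; linarith), if_pos (by rw [hnz]; linarith), e0, e1]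
            exact ⟨rfl, rfl⟩
          · rw [hlam0, hlam1, if_neg hc, if_neg hc, hnz]
            constructor <;> ring
        funext i
        fin_cases i
        · simpa using h00.trans hlz.1.symm
        · simpa using h01.trans hlz.2.symm
        · simpa using hlam'2.trans (hlam2.symm)
      · have hnpos : 0 < n := lt_of_le_of_ne hn0 (Ne.symm hnz)
        have hμn : 0 < μ * n := by positivity
        set a : ℝ := δ * β + μ * n with ha
        have hapos : 0 < a := by positivity
        have hl0 : lam' 0 = μ * n * lstar 0 / a := by
          field_simp; linear_combination key0
        have hl1 : lam' 1 = μ * n * lstar 1 / a := by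
          field_simp; linear_combination key1
        have hsr : s = μ * n / a * r := by
          have : (lam' 0) ^ 2 + (lam' 1) ^ 2 = (μ * n / a * r) ^ 2 := by
            rw [hl0, hl1]
            field_simp
            linear_combination (-1) * hr2
          rw [hs, this, Real.sqrt_sq (by positivity)]
        by_cases hc : r ≤ μ * n
        · -- interior case: δ = 0 and lam' = lstar = lam
          have hδ0 : δ = 0 := by
            by_contra hd
            have hδpos : 0 < δ := lt_of_le_of_ne hδ (Ne.symm hd)
            have hse : s = μ * n := by
              rcases mul_eq_zero.mp h5 with h | h
              · exact absurd h hd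
              · linarith
            have h' : μ * n / a * r = μ * n := by rw [← hsr, hse]
            rw [div_mul_eq_mul_div] at h'
            have hra : μ * n * r = μ * n * a := by
              have := (div_eq_iff (ne_of_gt hapos)).mp h'
              linear_combination this
            have hreq : r = a := mul_left_cancel₀ (ne_of_gt hμn) hra
            have hdb : 0 < δ * β := mul_pos hδpos hβ
            rw [ha] at hreq
            linarith
          have haeq : a = μ * n := by rw [ha, hδ0]; ring
          funext i
          fin_cases i
          · show lam' 0 = lam 0
            rw [hl0, haeq, hlam0, if_pos hc]; field_simp
          · show lam' 1 = lam 1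
            rw [hl1, haeq, hlam1, if_pos hc]; field_simp
          · show lam' 2 = lam 2
            rw [hlam'2, hlam2]
        · -- boundary case: s = μn forces a = r
          push_neg at hc
          have hrpos : 0 < r := lt_of_le_of_lt (by positivity) hc
          have hδpos : 0 < δ := by
            rcases lt_or_eq_of_le hδ with h | h
            · exact h
            · exfalso
              have haeq : a = μ * n := by rw [ha, ← h]; ring
              have : s = r := by rw [hsr, haeq]; field_simp
              rw [this] at h4; linarith
          have hse : s = μ * n := by
            rcases mul_eq_zero.mp h5 with h | h
            · exact absurd h (ne_of_gt hδpos)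
            · linarith
          have hra : a = r := by
            have h' : μ * n / a * r = μ * n := by rw [← hsr, hse]
            rw [div_mul_eq_mul_div] at h'
            have hra : μ * n * r = μ * n * a := by
              have := (div_eq_iff (ne_of_gt hapos)).mp h'
              linear_combination this
            exact (mul_left_cancel₀ (ne_of_gt hμn) hra).symm
          funext i
          fin_cases i
          · show lam' 0 = lam 0
            rw [hl0, hra, hlam0, if_neg (not_le.mpr hc)]
          · show lam' 1 = lam 1
            rw [hl1, hra, hlam1, if_neg (not_le.mpr hc)]
          · show lam' 2 = lam 2
            rw [hlam'2, hlam2]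
    refine ⟨hlam'eq, ?_⟩
    funext i
    have := hz' i
    rw [hlam'eq] at this
    rw [hzdef i]
    field_simp
    linarith [this]
end

section
/- Let μ > 0 and C = {(λₜ, λₙ) ∈ ℝ² × ℝ : ‖λₜ‖ ≤ μλₙ}. For x = (xₜ, xₙ) with ‖xₜ‖ > μ·max(xₙ, 0) and xₙ + μ‖xₜ‖ > 0, the Euclidean projection of x onto C is Π_C(x) = ((μ²‖xₜ‖ + μxₙ)/((μ²+1)‖xₜ‖) · xₜ, (μ‖xₜ‖ + xₙ)/(μ²+1)), and Π_C(x) lies on the boundary of C, i.e., ‖(Π_C(x))ₜ‖ = μ(Π_C(x))ₙ. -/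
set_option maxHeartbeats 1600000


/-- Explicit formula for the Euclidean projection onto the friction cone
`C = {(λₜ, λₙ) : ‖λₜ‖ ≤ μλₙ}` in the slip region, which lies on the boundary
of `C`. -/
theorem stmt17 (μ : ℝ) (hμ : 0 < μ) (x : EuclideanSpace ℝ (Fin 3)) :
    let s := Real.sqrt ((x 0) ^ 2 + (x 1) ^ 2)
    let C : Set (EuclideanSpace ℝ (Fin 3)) :=
      {w | Real.sqrt ((w 0) ^ 2 + (w 1) ^ 2) ≤ μ * w 2}
    ∀ _hout : μ * max (x 2) 0 < s, ∀ _hpolar : 0 < x 2 + μ * s,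
    ∀ y : EuclideanSpace ℝ (Fin 3),
      (y 0 = (μ ^ 2 * s + μ * x 2) / ((μ ^ 2 + 1) * s) * x 0 ∧
       y 1 = (μ ^ 2 * s + μ * x 2) / ((μ ^ 2 + 1) * s) * x 1 ∧
       y 2 = (μ * s + x 2) / (μ ^ 2 + 1)) →
      (y ∈ C ∧ (∀ w ∈ C, ‖x - y‖ ≤ ‖x - w‖) ∧
        Real.sqrt ((y 0) ^ 2 + (y 1) ^ 2) = μ * y 2) := by
  intro s C _hout _hpolar y ⟨hy0, hy1, hy2⟩
  have hs : 0 < s := lt_of_le_of_lt (by positivity) _hout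
  have hs2 : s ^ 2 = (x 0) ^ 2 + (x 1) ^ 2 := Real.sq_sqrt (by positivity)
  have hsne : s ≠ 0 := ne_of_gt hs
  have hd : (0:ℝ) < μ ^ 2 + 1 := by positivity
  have hr : 0 < μ * s + x 2 := by linarith
  have hα : 0 ≤ s - μ * x 2 := by
    have : μ * x 2 ≤ μ * max (x 2) 0 := by
      apply mul_le_mul_of_nonneg_left (le_max_left _ _) hμ.le
    linarith
  -- boundary equality
  have key : y 0 ^ 2 + y 1 ^ 2 = (μ * y 2) ^ 2 := by
    rw [hy0, hy1, hy2]
    field_simp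
    ring_nf
    linear_combination (-(μ^2*(x 2)^2*(2+2*μ^2+μ^4) + μ^3*(x 2)*s*(4+4*μ^2+2*μ^4)
      + μ^4*s^2*(2+2*μ^2+μ^4)) + μ^2*(x 2 + μ*s)^2 + (μ^2*(x 2)^2 + 2*μ^3*(x 2)*s + 2*μ^4*(x 2)^2 + μ^4*s^2 + 4*μ^5*(x 2)*s + μ^6*(x 2)^2 + 2*μ^6*s^2 + 2*μ^7*(x 2)*s + μ^8*s^2 - 1)) * hs2
  have hy2pos : 0 < y 2 := by rw [hy2]; positivity
  have heq : Real.sqrt ((y 0) ^ 2 + (y 1) ^ 2) = μ * y 2 := by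
    rw [key, Real.sqrt_sq (by positivity)]
  refine ⟨le_of_eq heq, ?_, heq⟩
  -- minimality
  intro w hw
  have hw' : Real.sqrt ((w 0) ^ 2 + (w 1) ^ 2) ≤ μ * w 2 := hw
  set t := Real.sqrt ((w 0) ^ 2 + (w 1) ^ 2) with hT
  have ht0 : 0 ≤ t := Real.sqrt_nonneg _
  have ht2 : t ^ 2 = (w 0) ^ 2 + (w 1) ^ 2 := Real.sq_sqrt (by positivity)
  have cauchy : x 0 * w 0 + x 1 * w 1 ≤ s * t := by
    nlinarith [sq_nonneg (x 0 * w 1 - x 1 * w 0), mul_nonneg hs.le ht0,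
      sq_nonneg (s * t - x 0 * w 0 - x 1 * w 1), sq_nonneg (s * t + x 0 * w 0 + x 1 * w 1)]
  have hzero : s ^ 2 - (x 0 ^ 2 + x 1 ^ 2) = 0 := by rw [hs2]; ring
  have hIP : (x 0 - y 0) * (w 0 - y 0) + (x 1 - y 1) * (w 1 - y 1)
      + (x 2 - y 2) * (w 2 - y 2)
      = (s - μ * x 2) / ((μ ^ 2 + 1) * s) * (x 0 * w 0 + x 1 * w 1 - μ * s * w 2)
        + (μ * (s - μ * x 2) * (μ * s + x 2) / ((μ ^ 2 + 1) ^ 2 * s ^ 2))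
          * (s ^ 2 - (x 0 ^ 2 + x 1 ^ 2)) := by
    rw [hy0, hy1, hy2]
    field_simp
    ring
  rw [hzero, mul_zero, add_zero] at hIP
  have hIPle : (x 0 - y 0) * (w 0 - y 0) + (x 1 - y 1) * (w 1 - y 1)
      + (x 2 - y 2) * (w 2 - y 2) ≤ 0 := by
    rw [hIP]
    apply mul_nonpos_of_nonneg_of_nonpos
    · positivity
    · nlinarith [mul_le_mul_of_nonneg_left hw' hs.le]
  have hnorm : ∀ u v : EuclideanSpace ℝ (Fin 3),
      ‖u - v‖ = Real.sqrt ((u 0 - v 0) ^ 2 + (u 1 - v 1) ^ 2 + (u 2 - v 2) ^ 2) := by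
    intro u v
    rw [EuclideanSpace.norm_eq]
    congr 1
    rw [Fin.sum_univ_three]
    simp only [PiLp.sub_apply, Real.norm_eq_abs, sq_abs]
  rw [hnorm, hnorm]
  apply Real.sqrt_le_sqrt
  nlinarith [sq_nonneg (w 0 - y 0), sq_nonneg (w 1 - y 1), sq_nonneg (w 2 - y 2)]
end
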